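/- arXiv:1109.4673 — 2 statements merged into one kernel-verified Lean document; each statement's English description precedes it below -/
import Mathlib

section
/- If G is a tree on an odd number n ≥ 3 of vertices with maximum degree at most 3 such that any two vertices of degree 3 in G are adjacent, then T(G) = 1. -/
open SimpleGraph

/-- Number of connected components `ω(G)`. -/
noncomputable def SimpleGraph.omegaComp {W : Type*} (G : SimpleGraph W) : ℕ :=
  Nat.card G.ConnectedComponent

/-- Order `τ(G)` of a largest connected component of `G`. -/
noncomputable def SimpleGraph.tauMax {W : Type*} (G : SimpleGraph W) : ℕ :=
  sSup (Set.range fun c : G.ConnectedComponent =>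
    Nat.card {v : W // G.connectedComponentMk v = c})

/-- The graph `G - X` obtained by deleting the vertices of `X`. -/
def SimpleGraph.delVerts {V : Type*} (G : SimpleGraph V) (X : Finset V) :
    SimpleGraph {v : V // v ∉ X} :=
  SimpleGraph.comap Subtype.val G

/-- `X` is a vertex cut of `G`: deleting `X` leaves more than one component. -/
def SimpleGraph.IsVertexCut {V : Type*} (G : SimpleGraph V) (X : Finset V) : Prop :=
  1 < (G.delVerts X).omegaComp

/-- The tenacity `T(G) = min over vertex cuts X of (|X| + τ(G−X)) / ω(G−X)`. -/
noncomputable def SimpleGraph.tenacity {V : Type*} [Fintype V] (G : SimpleGraph V) : ℝ :=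
  sInf { t : ℝ | ∃ X : Finset V, G.IsVertexCut X ∧
    t = ((X.card : ℝ) + (G.delVerts X).tauMax) / (G.delVerts X).omegaComp }

/-- Vertex degree via `Nat.card` (no decidability assumptions needed). -/
noncomputable def SimpleGraph.deg {V : Type*} (G : SimpleGraph V) (v : V) : ℕ :=
  Nat.card (G.neighborSet v)

/-- A unicyclic graph: connected with as many edges as vertices. -/
def SimpleGraph.Unicyclic {V : Type*} [Fintype V] (G : SimpleGraph V) : Prop :=
  G.Connected ∧ Nat.card G.edgeSet = Fintype.card V

/-!
Lower bound: deleting the edges at a vertex `a` raises the number of components by at most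
`deg a`, so deleting the edges at all vertices of `X` leaves at most `1 + ∑_{v ∈ X} deg v`
components, `|X|` of which are the now isolated vertices of `X`. If some `u ∈ X` has degree `3`,
every other vertex of degree `3` is adjacent to `u`, so after isolating `u` first all vertices of
`X` count with degree at most `2`. Either way `ω(G - X) ≤ |X| + 2`. This is at most
`|X| + τ(G - X)` unless all components of `G - X` are single vertices; then
`ω(G - X) = n - |X|`, and `n` being odd sharpens `n - |X| ≤ |X| + 2` to `n - |X| ≤ |X| + 1`.

Upper bound: a tree is bipartite, so some colour class `I` has `2|I| ≥ n + 1`. Deleting the other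
vertices leaves `|I| ≥ 2` isolated vertices, a cut of ratio `(n - |I| + 1) / |I| ≤ 1`.
-/

open Finset

namespace SimpleGraph

variable {V : Type*} {G : SimpleGraph V}

lemma Reachable.apply_eq_of_forall_adj {β : Sort*} {f : V → β}
    (hf : ∀ u v, G.Adj u v → f u = f v) {u v : V} (h : G.Reachable u v) : f u = f v := by
  obtain ⟨p⟩ := h
  induction p with
  | nil => rfl
  | cons hadj _ ih => exact (hf _ _ hadj).trans ih

lemma Connected.card_connectedComponent (hG : G.Connected) :
    Nat.card G.ConnectedComponent = 1 :=
  have := hG.nonempty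
  Nat.card_eq_one_iff_unique.mpr ⟨hG.preconnected.subsingleton_connectedComponent, inferInstance⟩

lemma deg_mono [Finite V] {H : SimpleGraph V} (h : H ≤ G) (v : V) : H.deg v ≤ G.deg v :=
  Nat.card_mono (Set.toFinite _) fun _ hw => h hw

lemma deg_deleteIncidenceSet_self (u : V) : (G.deleteIncidenceSet u).deg u = 0 := by
  simp [deg, neighborSet, deleteIncidenceSet_adj]

lemma deg_deleteIncidenceSet_add_one [Finite V] {u v : V} (h : G.Adj v u) :
    (G.deleteIncidenceSet u).deg v + 1 = G.deg v := by
  have hN : (G.deleteIncidenceSet u).neighborSet v = G.neighborSet v \ {u} := by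
    ext w
    simp [deleteIncidenceSet_adj, h.ne, and_comm]
  rw [deg, deg, hN, Nat.card_coe_set_eq, Nat.card_coe_set_eq]
  exact Set.ncard_sdiff_singleton_add_one h (Set.toFinite _)

lemma Walk.reachable_deleteIncidenceSet {u v a : V} (p : G.Walk u v) (ha : a ∉ p.support) :
    (G.deleteIncidenceSet a).Reachable u v :=
  ⟨p.toDeleteEdges _ fun _ he hae => ha (p.mem_support_of_mem_edges he hae.2)⟩

lemma Walk.exists_adj_reachable_deleteIncidenceSet {u a : V} (p : G.Walk u a) (hu : u ≠ a) :
    ∃ n, G.Adj a n ∧ (G.deleteIncidenceSet a).Reachable u n := by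
  induction p with
  | nil => exact absurd rfl hu
  | @cons u w a h q ih =>
    by_cases hw : w = a
    · subst hw
      exact ⟨u, h.symm, .rfl⟩
    · obtain ⟨n, hn, hr⟩ := ih hw
      exact ⟨n, hn, (deleteIncidenceSet_adj.mpr ⟨h, hu, hw⟩).reachable.trans hr⟩

/-- Every new component contains a neighbour of `a`, except the one of `a` itself, which
replaces the old component of `a`. -/
lemma card_connectedComponent_deleteIncidenceSet_le [Finite V] (G : SimpleGraph V) (a : V) :
    Nat.card (G.deleteIncidenceSet a).ConnectedComponent
      ≤ Nat.card G.ConnectedComponent + G.deg a := by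
  classical
  set H := G.deleteIncidenceSet a
  let f : G.ConnectedComponent ⊕ G.neighborSet a → H.ConnectedComponent
    | .inl c => if c = G.connectedComponentMk a then H.connectedComponentMk a
        else H.connectedComponentMk c.out
    | .inr n => H.connectedComponentMk n
  have hf : Function.Surjective f := by
    refine ConnectedComponent.ind fun v => ?_
    by_cases hva : v = a
    · exact ⟨.inl (G.connectedComponentMk a), by simp [f, hva]⟩
    by_cases hc : G.connectedComponentMk v = G.connectedComponentMk a
    · obtain ⟨p⟩ := ConnectedComponent.exact hc
      obtain ⟨n, hn, hr⟩ := p.exists_adj_reachable_deleteIncidenceSet hva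
      exact ⟨.inr ⟨n, hn⟩, (ConnectedComponent.sound hr).symm⟩
    · obtain ⟨p⟩ := ConnectedComponent.exact (G.connectedComponentMk v).out_eq
      have ha : a ∉ p.support := fun ha =>
        hc (ConnectedComponent.sound (p.dropUntil a ha).reachable).symm
      refine ⟨.inl (G.connectedComponentMk v), ?_⟩
      simp only [f, if_neg hc]
      exact ConnectedComponent.sound (p.reachable_deleteIncidenceSet ha)
  calc Nat.card H.ConnectedComponent
      ≤ Nat.card (G.ConnectedComponent ⊕ G.neighborSet a) := Nat.card_le_card_of_surjective f hf
    _ = Nat.card G.ConnectedComponent + G.deg a := Nat.card_sum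

def isolateVerts (G : SimpleGraph V) (s : Set V) : SimpleGraph V where
  Adj u v := G.Adj u v ∧ u ∉ s ∧ v ∉ s
  symm := ⟨fun _ _ h => ⟨h.1.symm, h.2.2, h.2.1⟩⟩
  loopless := ⟨fun v h => G.loopless.irrefl v h.1⟩

@[simp]
lemma isolateVerts_adj {s : Set V} {u v : V} :
    (G.isolateVerts s).Adj u v ↔ G.Adj u v ∧ u ∉ s ∧ v ∉ s := Iff.rfl

lemma isolateVerts_le (s : Set V) : G.isolateVerts s ≤ G := fun _ _ h => h.1

lemma isolateVerts_empty : G.isolateVerts ∅ = G := by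
  ext
  simp

lemma isolateVerts_insert (a : V) (s : Set V) :
    G.isolateVerts (insert a s) = (G.isolateVerts s).deleteIncidenceSet a := by
  ext u v
  simp only [isolateVerts_adj, Set.mem_insert_iff, not_or, deleteIncidenceSet_adj, ne_eq]
  tauto

lemma isolateVerts_deleteIncidenceSet {a : V} {s : Set V} (ha : a ∈ s) :
    (G.deleteIncidenceSet a).isolateVerts s = G.isolateVerts s := by
  ext u v
  simp only [isolateVerts_adj, deleteIncidenceSet_adj]
  constructor
  · exact fun h => ⟨h.1.1, h.2⟩
  · exact fun h => ⟨⟨h.1, (ne_of_mem_of_not_mem ha h.2.1).symm,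
      (ne_of_mem_of_not_mem ha h.2.2).symm⟩, h.2⟩

lemma card_connectedComponent_isolateVerts_le [Finite V] (G : SimpleGraph V) (X : Finset V) :
    Nat.card (G.isolateVerts X).ConnectedComponent
      ≤ Nat.card G.ConnectedComponent + ∑ v ∈ X, G.deg v := by
  classical
  induction X using Finset.induction_on with
  | empty => simp [isolateVerts_empty]
  | insert a X ha ih =>
    rw [coe_insert, isolateVerts_insert, sum_insert ha]
    have := card_connectedComponent_deleteIncidenceSet_le (G.isolateVerts X) a
    have := deg_mono (isolateVerts_le (G := G) X) a
    omega

lemma card_connectedComponent_delVerts_add_card_le [Finite V] (G : SimpleGraph V)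
    (X : Finset V) :
    Nat.card (G.delVerts X).ConnectedComponent + #X
      ≤ Nat.card (G.isolateVerts X).ConnectedComponent := by
  classical
  let g : V → (G.delVerts X).ConnectedComponent ⊕ X := fun v =>
    if h : v ∈ X then .inr ⟨v, h⟩ else .inl ((G.delVerts X).connectedComponentMk ⟨v, h⟩)
  have hg : ∀ u v, (G.isolateVerts X).Adj u v → g u = g v := by
    rintro u v ⟨huv, hu, hv⟩
    rw [mem_coe] at hu hv
    simp only [g, dif_neg hu, dif_neg hv]
    exact congrArg Sum.inl (ConnectedComponent.connectedComponentMk_eq_of_adj huv)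
  let f := ConnectedComponent.lift g fun u v p _ => p.reachable.apply_eq_of_forall_adj hg
  have hf : Function.Surjective f := by
    rintro (c | ⟨x, hx⟩)
    · induction c using ConnectedComponent.ind with
      | h v => exact ⟨connectedComponentMk _ v, by simp [f, g, v.2]⟩
    · exact ⟨connectedComponentMk _ x, by simp [f, g, hx]⟩
  calc Nat.card (G.delVerts X).ConnectedComponent + #X
      = Nat.card ((G.delVerts X).ConnectedComponent ⊕ X) := by
        rw [Nat.card_sum, Nat.card_eq_finsetCard]
    _ ≤ Nat.card (G.isolateVerts X).ConnectedComponent := Nat.card_le_card_of_surjective f hf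

lemma omegaComp_delVerts_le_card_add_two [Finite V] (hG : G.Connected)
    (hdeg : ∀ v, G.deg v ≤ 3)
    (hadj : ∀ u v, G.deg u = 3 → G.deg v = 3 → u ≠ v → G.Adj u v) (X : Finset V) :
    (G.delVerts X).omegaComp ≤ #X + 2 := by
  classical
  have hG1 := hG.card_connectedComponent
  have hdel := card_connectedComponent_delVerts_add_card_le G X
  rw [omegaComp]
  by_cases hX : ∃ u ∈ X, G.deg u = 3
  · obtain ⟨u, hu, hu3⟩ := hX
    have hH : Nat.card (G.deleteIncidenceSet u).ConnectedComponent ≤ 4 := by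
      have := card_connectedComponent_deleteIncidenceSet_le G u
      omega
    have hdegH : ∀ w ∈ X.erase u, (G.deleteIncidenceSet u).deg w ≤ 2 := by
      intro w hw
      obtain ⟨hwu, -⟩ := mem_erase.mp hw
      by_cases hw3 : G.deg w = 3
      · have := deg_deleteIncidenceSet_add_one (hadj w u hw3 hu3 hwu)
        omega
      · have := deg_mono (G.deleteIncidenceSet_le u) w
        have := hdeg w
        omega
    have hsum : ∑ w ∈ X, (G.deleteIncidenceSet u).deg w ≤ 2 * (#X - 1) := by
      rw [← add_sum_erase X _ hu, deg_deleteIncidenceSet_self, zero_add, ← card_erase_of_mem hu,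
        mul_comm]
      exact sum_le_card_nsmul _ _ _ hdegH
    have hiso := card_connectedComponent_isolateVerts_le (G.deleteIncidenceSet u) X
    rw [isolateVerts_deleteIncidenceSet (mem_coe.mpr hu)] at hiso
    have : 1 ≤ #X := card_pos.mpr ⟨u, hu⟩
    omega
  · push Not at hX
    have hsum : ∑ w ∈ X, G.deg w ≤ 2 * #X := by
      rw [mul_comm]
      exact sum_le_card_nsmul _ _ _ fun w hw => by have := hdeg w; have := hX w hw; omega
    have hiso := card_connectedComponent_isolateVerts_le G X
    omega

section Components

variable {W : Type*} [Finite W] (K : SimpleGraph W)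

lemma card_le_tauMax (c : K.ConnectedComponent) :
    Nat.card {v // K.connectedComponentMk v = c} ≤ K.tauMax :=
  le_csSup (Set.finite_range _).bddAbove ⟨c, rfl⟩

lemma one_le_tauMax [Nonempty W] : 1 ≤ K.tauMax := by
  obtain ⟨v⟩ := ‹Nonempty W›
  have : Nonempty {w // K.connectedComponentMk w = K.connectedComponentMk v} := ⟨⟨v, rfl⟩⟩
  exact Nat.card_pos.trans_le (K.card_le_tauMax (K.connectedComponentMk v))

lemma tauMax_le_one_iff : K.tauMax ≤ 1 ↔ Function.Injective K.connectedComponentMk := by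
  constructor
  · intro h u v huv
    have := Finite.card_le_one_iff_subsingleton.mp
      ((K.card_le_tauMax (K.connectedComponentMk v)).trans h)
    exact congrArg Subtype.val
      (Subsingleton.elim (⟨u, huv⟩ : {w // K.connectedComponentMk w = K.connectedComponentMk v})
        ⟨v, rfl⟩)
  · intro h
    refine csSup_le' ?_
    rintro _ ⟨c, rfl⟩
    exact Finite.card_le_one_iff_subsingleton.mpr
      ⟨fun u v => Subtype.ext (h (u.2.trans v.2.symm))⟩

lemma card_connectedComponent_of_tauMax_le_one (h : K.tauMax ≤ 1) :
    Nat.card K.ConnectedComponent = Nat.card W :=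
  (Nat.card_eq_of_bijective _ ⟨(K.tauMax_le_one_iff).mp h, Quot.mk_surjective⟩).symm

end Components

lemma IsVertexCut.nonempty {X : Finset V} (hX : G.IsVertexCut X) : Nonempty {v // v ∉ X} := by
  obtain ⟨c⟩ := (Nat.card_pos_iff.mp (zero_lt_one.trans hX)).1
  exact ⟨c.out⟩

lemma IsVertexCut.omegaComp_le_card_add_tauMax [Fintype V] (hodd : Odd (Fintype.card V))
    {X : Finset V} (hX : G.IsVertexCut X) (h : (G.delVerts X).omegaComp ≤ #X + 2) :
    (G.delVerts X).omegaComp ≤ #X + (G.delVerts X).tauMax := by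
  classical
  have := hX.nonempty
  rcases le_or_gt 2 (G.delVerts X).tauMax with h2 | h1
  · omega
  · have hω := card_connectedComponent_of_tauMax_le_one _ (by omega : (G.delVerts X).tauMax ≤ 1)
    have hcard : Nat.card {v // v ∉ X} = Fintype.card V - #X := by simp
    have hX : #X ≤ Fintype.card V := card_le_univ X
    rw [omegaComp, hω, hcard] at h ⊢
    have := (G.delVerts X).one_le_tauMax
    obtain ⟨k, hk⟩ := hodd
    omega

section IndepSet

variable [Fintype V]

lemma Colorable.exists_isIndepSet_card_ge (h : G.Colorable 2) :
    ∃ I : Finset V, G.IsIndepSet I ∧ Fintype.card V ≤ 2 * #I := by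
  obtain ⟨C⟩ := h
  obtain ⟨y, hy⟩ := Fintype.exists_le_card_fiber_of_nsmul_le_card C
    (b := (Fintype.card V / 2 : ℚ)) (by simp [mul_div_cancel₀])
  refine ⟨({v | C v = y} : Finset V), ?_, ?_⟩
  · simpa [Coloring.colorClass] using C.isIndepSet_colorClass y
  · rw [div_le_iff₀ two_pos] at hy
    have : (Fintype.card V : ℚ) ≤ 2 * #({v | C v = y} : Finset V) := by linarith
    exact_mod_cast this

variable [DecidableEq V] {I : Finset V}

lemma tauMax_delVerts_compl_le_one (hI : G.IsIndepSet I) : (G.delVerts Iᶜ).tauMax ≤ 1 := by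
  refine (tauMax_le_one_iff _).mpr fun u v huv => ?_
  refine (ConnectedComponent.exact huv).apply_eq_of_forall_adj (f := id) fun x y hxy => ?_
  exact absurd hxy (hI (by simpa using x.2) (by simpa using y.2) (G.ne_of_adj hxy))

lemma omegaComp_delVerts_compl (hI : G.IsIndepSet I) : (G.delVerts Iᶜ).omegaComp = #I := by
  rw [omegaComp, card_connectedComponent_of_tauMax_le_one _ (tauMax_delVerts_compl_le_one hI)]
  simp

lemma isVertexCut_compl (hI : G.IsIndepSet I) (h2 : 2 ≤ #I) : G.IsVertexCut Iᶜ := by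
  rw [IsVertexCut, omegaComp_delVerts_compl hI]
  omega

end IndepSet

section Tenacity

variable [Fintype V]

lemma tenacity_le_one {X : Finset V} (hX : G.IsVertexCut X)
    (h : #X + (G.delVerts X).tauMax ≤ (G.delVerts X).omegaComp) : G.tenacity ≤ 1 := by
  have hpos : (0 : ℝ) < (G.delVerts X).omegaComp := Nat.cast_pos.mpr (zero_lt_one.trans hX)
  unfold tenacity
  refine csInf_le_of_le ⟨0, ?_⟩ ⟨X, hX, rfl⟩ ((div_le_one hpos).mpr (by exact_mod_cast h))
  rintro _ ⟨Y, -, rfl⟩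
  positivity

lemma one_le_tenacity (hne : ∃ X, G.IsVertexCut X)
    (h : ∀ X, G.IsVertexCut X → (G.delVerts X).omegaComp ≤ #X + (G.delVerts X).tauMax) :
    1 ≤ G.tenacity := by
  obtain ⟨X, hX⟩ := hne
  refine le_csInf ⟨_, X, hX, rfl⟩ ?_
  rintro _ ⟨Y, hY, rfl⟩
  have hpos : (0 : ℝ) < (G.delVerts Y).omegaComp := Nat.cast_pos.mpr (zero_lt_one.trans hY)
  exact (one_le_div hpos).mpr (by exact_mod_cast h Y hY)

end Tenacity

end SimpleGraph

theorem tree_odd_good_degrees (n : ℕ) (hodd : Odd n) (hn : 3 ≤ n)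
    (G : SimpleGraph (Fin n)) (hT : G.IsTree)
    (hdeg : ∀ v, G.deg v ≤ 3)
    (hadj : ∀ u v, G.deg u = 3 → G.deg v = 3 → u ≠ v → G.Adj u v) :
    G.tenacity = 1 := by
  obtain ⟨I, hI, hIcard⟩ := hT.colorable_two.exists_isIndepSet_card_ge
  rw [Fintype.card_fin] at hIcard
  have hcut : G.IsVertexCut Iᶜ := isVertexCut_compl hI (by omega)
  have hratio : #Iᶜ + (G.delVerts Iᶜ).tauMax ≤ (G.delVerts Iᶜ).omegaComp := by
    have := tauMax_delVerts_compl_le_one hI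
    rw [omegaComp_delVerts_compl hI, card_compl, Fintype.card_fin]
    obtain ⟨k, rfl⟩ := hodd
    omega
  refine le_antisymm (tenacity_le_one hcut hratio) (one_le_tenacity ⟨_, hcut⟩ fun X hX => ?_)
  exact hX.omegaComp_le_card_add_tauMax (by simpa using hodd)
    (omegaComp_delVerts_le_card_add_two hT.connected hdeg hadj X)
end

section
/- Among all unicyclic graphs on n vertices (n ≥ 4), the maximum tenacity is (n+3)/(n−1) if n is odd and (n+2)/n if n is even. -/
/-!
Deleting the complement of an independent set `I` with `|I| = k ≥ 2` leaves `k` isolated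
vertices, a cut of value `(n - k + 1) / k`. A unicyclic graph is a spanning tree plus one edge
`uv`; of the two colour classes of the tree, either the one avoiding `u` or the other one minus
`u` is independent and has at least `⌊n/2⌋` vertices, so `T(G) ≤ (n - ⌊n/2⌋ + 1) / ⌊n/2⌋`.
The cycle `C_n` attains this: for a cut `X` of `C_n` with `s = |X|` and `ω` components of sizes
at most `τ`, one has `ω ≤ s`, `ω ≤ n - s` and `n - s ≤ τ ω`, which force
`(s + τ) / ω ≥ (n - ⌊n/2⌋ + 1) / ⌊n/2⌋`.
-/

open SimpleGraph

namespace SimpleGraph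

variable {V : Type*}

lemma Connected.omegaComp_eq_one {H : SimpleGraph V} (h : H.Connected) : H.omegaComp = 1 :=
  have := h.preconnected.subsingleton_connectedComponent
  have : Nonempty H.ConnectedComponent := ⟨H.connectedComponentMk h.nonempty.some⟩
  Nat.card_unique

lemma omegaComp_bot : (⊥ : SimpleGraph V).omegaComp = Nat.card V :=
  (Nat.card_eq_of_bijective _ ⟨fun _ _ h => reachable_bot.mp (ConnectedComponent.exact h),
    fun c => c.exists_rep⟩).symm

lemma Connected.nonempty_of_isVertexCut {G : SimpleGraph V} (hG : G.Connected) {X : Finset V}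
    (hX : G.IsVertexCut X) : X.Nonempty := by
  rw [Finset.nonempty_iff_ne_empty]
  rintro rfl
  have hconn : (G.delVerts ∅).Connected :=
    (Iso.comap (Equiv.subtypeUnivEquiv fun v => Finset.notMem_empty v) G).symm.connected_iff.mp hG
  exact hX.ne' hconn.omegaComp_eq_one

lemma IsIndepSet.sup_edge {H : SimpleGraph V} {S : Set V} (hS : H.IsIndepSet S) {u : V}
    (hu : u ∉ S) (v : V) : (H ⊔ edge u v).IsIndepSet S := by
  intro x hx y hy hxy hadj
  rcases hadj with h | h
  · exact hS hx hy hxy h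
  · rw [edge_adj] at h
    obtain ⟨rfl, -⟩ | ⟨-, rfl⟩ := h.1
    · exact hu hx
    · exact hu hy

lemma exists_isNIndepSet_of_le_card {G : SimpleGraph V} {S : Finset V} (hS : G.IsIndepSet S)
    {k : ℕ} (hk : k ≤ S.card) : ∃ I, G.IsNIndepSet k I := by
  obtain ⟨I, hIS, rfl⟩ := Finset.exists_subset_card_eq hk
  exact ⟨I, ⟨hS.mono (by simpa using hIS), rfl⟩⟩

section Finite

variable [Finite V] (H : SimpleGraph V)

lemma omegaComp_le_card : H.omegaComp ≤ Nat.card V :=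
  Nat.card_le_card_of_surjective _ fun c => c.exists_rep

lemma card_fiber_le_tauMax (c : H.ConnectedComponent) :
    Nat.card {v // H.connectedComponentMk v = c} ≤ H.tauMax :=
  le_csSup ⟨Nat.card V, by
    rintro _ ⟨c', rfl⟩
    exact Nat.card_le_card_of_injective _ Subtype.val_injective⟩ ⟨c, rfl⟩

lemma one_le_tauMax_s16 [Nonempty V] : 1 ≤ H.tauMax := by
  obtain ⟨w⟩ := ‹Nonempty V›
  have : Nonempty {v // H.connectedComponentMk v = H.connectedComponentMk w} := ⟨⟨w, rfl⟩⟩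
  exact Nat.card_pos.trans_le (H.card_fiber_le_tauMax (H.connectedComponentMk w))

lemma card_le_tauMax_mul_omegaComp : Nat.card V ≤ H.tauMax * H.omegaComp := by
  have := Fintype.ofFinite H.ConnectedComponent
  calc Nat.card V
      = ∑ c : H.ConnectedComponent, Nat.card {v // H.connectedComponentMk v = c} := by
        rw [← Nat.card_sigma, Nat.card_congr (Equiv.sigmaFiberEquiv _)]
    _ ≤ ∑ _c : H.ConnectedComponent, H.tauMax :=
        Finset.sum_le_sum fun c _ => H.card_fiber_le_tauMax c
    _ = H.tauMax * H.omegaComp := by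
        rw [Finset.sum_const, Finset.card_univ, smul_eq_mul, mul_comm, omegaComp,
          Nat.card_eq_fintype_card]

lemma tauMax_bot [Nonempty V] : (⊥ : SimpleGraph V).tauMax = 1 := by
  refine le_antisymm (csSup_le (Set.range_nonempty _) ?_) (one_le_tauMax_s16 _)
  rintro _ ⟨c, rfl⟩
  refine Finite.card_le_one_iff_subsingleton.mpr ⟨fun ⟨a, ha⟩ ⟨b, hb⟩ => ?_⟩
  exact Subtype.ext (reachable_bot.mp (ConnectedComponent.exact (ha.trans hb.symm)))

/-- Sending a component of `G - X` to the first point of `X` on the forward `f`-orbit of one of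
its vertices is injective. -/
lemma omegaComp_delVerts_le_card_of_iterate {G : SimpleGraph V} {f : V → V}
    (hf : f.Injective) (hadj : ∀ v, G.Adj v (f v)) {X : Finset V}
    (hX : ∀ v, ∃ k, f^[k] v ∈ X) : (G.delVerts X).omegaComp ≤ X.card := by
  classical
  set H := G.delVerts X
  let d : {v // v ∉ X} → ℕ := fun v => Nat.find (hX v)
  have hd : ∀ v, f^[d v] v.1 ∈ X := fun v => Nat.find_spec (hX v)
  have hd_pos : ∀ v, d v ≠ 0 := fun v h0 => v.2 (by simpa [h0] using hd v)
  have reach : ∀ v j, j < d v → ∀ w : {v // v ∉ X}, w.1 = f^[j] v.1 → H.Reachable v w := by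
    intro v j
    induction j with
    | zero => rintro - w hw; rw [Subtype.ext hw]
    | succ j ih =>
      rintro hj w hw
      refine (ih (by omega) ⟨f^[j] v, Nat.find_min (hX v) (show j < d v by omega)⟩ rfl).trans
        (Adj.reachable ?_)
      simpa [H, delVerts, hw, Function.iterate_succ_apply'] using hadj (f^[j] v)
  have reach_of_eq : ∀ v w, f^[d v] v.1 = f^[d w] w.1 → H.Reachable v w := by
    intro v w h
    obtain ⟨a, ha⟩ := Nat.exists_eq_succ_of_ne_zero (hd_pos v)
    obtain ⟨b, hb⟩ := Nat.exists_eq_succ_of_ne_zero (hd_pos w)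
    rw [ha, hb, Function.iterate_succ_apply', Function.iterate_succ_apply'] at h
    have hwb : f^[b] w.1 ∉ X := Nat.find_min (hX w) (show b < d w by omega)
    exact (reach v a (by omega) ⟨_, hwb⟩ (hf h).symm).trans
      (reach w b (by omega) ⟨_, hwb⟩ rfl).symm
  let rep (c : H.ConnectedComponent) := c.exists_rep.choose
  have hrep (c : H.ConnectedComponent) : H.connectedComponentMk (rep c) = c :=
    c.exists_rep.choose_spec
  calc H.omegaComp ≤ Nat.card X :=
        Nat.card_le_card_of_injective (fun c => ⟨_, hd (rep c)⟩) fun c c' h => by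
          rw [← hrep c, ← hrep c']
          exact ConnectedComponent.sound (reach_of_eq _ _ (congrArg Subtype.val h))
    _ = X.card := Nat.card_eq_finsetCard X

end Finite

section Fintype

variable [Fintype V]

lemma tenacity_le_of_isVertexCut {G : SimpleGraph V} {X : Finset V} (hX : G.IsVertexCut X) :
    G.tenacity ≤ ((X.card : ℝ) + (G.delVerts X).tauMax) / (G.delVerts X).omegaComp :=
  csInf_le ⟨0, by rintro _ ⟨Y, _, rfl⟩; positivity⟩ ⟨X, hX, rfl⟩

section IndepSetCompl

variable [DecidableEq V] {G : SimpleGraph V} {k : ℕ} {I : Finset V}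

lemma IsIndepSet.delVerts_compl_eq_bot (hI : G.IsIndepSet I) : G.delVerts Iᶜ = ⊥ := by
  ext ⟨a, ha⟩ ⟨b, hb⟩
  simp only [Finset.mem_compl, not_not] at ha hb
  simp only [delVerts, comap_adj, bot_adj, iff_false]
  exact fun hab => hI ha hb hab.ne hab

lemma _root_.Finset.natCard_subtype_notMem_compl : Nat.card {v // v ∉ Iᶜ} = I.card := by
  simp

lemma IsNIndepSet.isVertexCut_compl (hI : G.IsNIndepSet k I) (hk : 2 ≤ k) :
    G.IsVertexCut Iᶜ := by
  rw [IsVertexCut, hI.isIndepSet.delVerts_compl_eq_bot, omegaComp_bot,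
    Finset.natCard_subtype_notMem_compl, hI.card_eq]
  omega

lemma IsNIndepSet.tenacity_le (hI : G.IsNIndepSet k I) (hk : 2 ≤ k) :
    G.tenacity ≤ ((Fintype.card V : ℝ) - k + 1) / k := by
  have : Nonempty {v // v ∉ Iᶜ} :=
    (Nat.card_pos_iff.mp (by rw [Finset.natCard_subtype_notMem_compl, hI.card_eq]; omega)).1
  refine (tenacity_le_of_isVertexCut (hI.isVertexCut_compl hk)).trans_eq ?_
  rw [hI.isIndepSet.delVerts_compl_eq_bot, omegaComp_bot, tauMax_bot,
    Finset.natCard_subtype_notMem_compl, Finset.card_compl, hI.card_eq, Nat.cast_sub (hI.card_eq ▸ I.card_le_univ)]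
  push_cast
  ring

end IndepSetCompl

lemma Colorable.exists_isNIndepSet_sup_edge {H : SimpleGraph V} (hH : H.Colorable 2)
    (u v : V) : ∃ I, (H ⊔ edge u v).IsNIndepSet (Fintype.card V / 2) I := by
  classical
  obtain ⟨C⟩ := hH
  set A := Finset.univ.filter (C · = C u)
  have hA : H.IsIndepSet A := by
    intro x hx y hy _ hxy
    simp only [A, Finset.coe_filter, Finset.mem_univ, true_and] at hx hy
    exact C.valid hxy (hx.trans hy.symm)
  have hAc : H.IsIndepSet ↑Aᶜ := by
    intro x hx y hy _ hxy
    simp only [A, Finset.coe_compl, Finset.coe_filter, Finset.mem_univ, true_and,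
      Set.mem_compl_iff, Set.mem_ofPred_eq] at hx hy
    exact C.valid hxy (by omega)
  by_cases hbig : Fintype.card V / 2 < A.card
  · refine exists_isNIndepSet_of_le_card (IsIndepSet.sup_edge (u := u)
      (hA.mono (by simpa using A.erase_subset u)) (by simp) v) ?_
    rw [Finset.card_erase_of_mem (by simp [A])]
    omega
  · refine exists_isNIndepSet_of_le_card (hAc.sup_edge (by simp [A]) v) ?_
    rw [Finset.card_compl]
    omega

lemma Unicyclic.exists_isTree_le_sup_edge {G : SimpleGraph V} (hG : G.Unicyclic) :
    ∃ T : SimpleGraph V, ∃ u v, T.IsTree ∧ G ≤ T ⊔ edge u v := by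
  classical
  obtain ⟨T, hTG, hT⟩ := hG.1.exists_isTree_le
  have hcard : (G.edgeSet \ T.edgeSet).ncard = 1 := by
    have hT := hT.card_edgeFinset
    have hG := hG.2
    rw [Set.ncard_sdiff (edgeSet_mono hTG), ← Nat.card_coe_set_eq, hG,
      ← Nat.card_coe_set_eq, Nat.card_eq_card_toFinset, ← edgeFinset]
    omega
  obtain ⟨e, he⟩ := Set.ncard_eq_one.mp hcard
  induction e using Sym2.ind with
  | _ u v =>
  refine ⟨T, u, v, hT, fun x y hxy => ?_⟩
  by_cases hT : T.Adj x y
  · exact Or.inl hT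
  · have : s(x, y) ∈ G.edgeSet \ T.edgeSet := ⟨hxy, hT⟩
    rw [he, Set.mem_singleton_iff, Sym2.eq_iff] at this
    exact Or.inr ((edge_adj _ _ _ _).mpr ⟨this, hxy.ne⟩)

lemma Unicyclic.exists_isNIndepSet {G : SimpleGraph V} (hG : G.Unicyclic) :
    ∃ I, G.IsNIndepSet (Fintype.card V / 2) I := by
  obtain ⟨T, u, v, hT, hGT⟩ := hG.exists_isTree_le_sup_edge
  obtain ⟨I, hI⟩ := hT.colorable_two.exists_isNIndepSet_sup_edge u v
  exact ⟨I, hI.isIndepSet.mono' fun _ _ h h' => h (hGT h'), hI.card_eq⟩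

end Fintype

/-- The value of the cut of `C_n` that leaves `⌊n/2⌋` isolated vertices. -/
noncomputable def cycleTenacity (n : ℕ) : ℝ := ((n : ℝ) - (n / 2 : ℕ) + 1) / (n / 2 : ℕ)

lemma cycleTenacity_eq (n : ℕ) :
    cycleTenacity n = if Odd n then ((n : ℝ) + 3) / ((n : ℝ) - 1) else ((n : ℝ) + 2) / n := by
  unfold cycleTenacity
  split_ifs with h
  · obtain ⟨k, rfl⟩ := h
    rw [show (2 * k + 1) / 2 = k by omega]
    push_cast
    rw [show (2 : ℝ) * k + 1 + 3 = 2 * (k + 2) by ring, show (2 : ℝ) * k + 1 - 1 = 2 * k by ring,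
      mul_div_mul_left _ _ two_ne_zero]
    ring
  · obtain ⟨k, rfl⟩ := Nat.not_odd_iff_even.mp h
    rw [show (k + k) / 2 = k by omega]
    push_cast
    rw [show (k : ℝ) + k + 2 = 2 * (k + 1) by ring, show (k : ℝ) + k = 2 * k by ring,
      mul_div_mul_left _ _ two_ne_zero]
    ring

lemma Unicyclic.tenacity_le [Fintype V] {G : SimpleGraph V} (hG : G.Unicyclic)
    (hV : 4 ≤ Fintype.card V) : G.tenacity ≤ cycleTenacity (Fintype.card V) := by
  classical
  obtain ⟨I, hI⟩ := hG.exists_isNIndepSet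
  exact hI.tenacity_le (by omega)

lemma cycleGraph_unicyclic {n : ℕ} (hn : 3 ≤ n) : (cycleGraph n).Unicyclic := by
  obtain ⟨n, rfl⟩ := Nat.exists_eq_add_of_le' hn
  refine ⟨cycleGraph_connected, ?_⟩
  have := (cycleGraph (n + 3)).sum_degrees_eq_twice_card_edges
  simp only [cycleGraph_degree_three_le, Finset.sum_const, Finset.card_univ, smul_eq_mul] at this
  rw [Nat.card_eq_card_toFinset, ← edgeFinset]
  omega

open Fin.CommRing in
lemma cycleGraph_omegaComp_delVerts_le {n : ℕ} (hn : 2 ≤ n) {X : Finset (Fin n)}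
    (hX : X.Nonempty) : ((cycleGraph n).delVerts X).omegaComp ≤ X.card := by
  obtain ⟨n, rfl⟩ := Nat.exists_eq_add_of_le' hn
  obtain ⟨x, hx⟩ := hX
  refine omegaComp_delVerts_le_card_of_iterate (f := (· + 1)) (add_left_injective 1)
    (fun v => by simp [cycleGraph_adj]) fun v => ⟨(x - v).val, ?_⟩
  rwa [add_right_iterate_apply, nsmul_one, Fin.cast_val_eq_self, add_sub_cancel]

lemma _root_.Nat.sub_half_add_one_mul_le {n s ω τ : ℕ} (hωs : ω ≤ s) (hωm : ω ≤ n - s)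
    (hτ : 1 ≤ τ) (hτω : n - s ≤ τ * ω) : (n - n / 2 + 1) * ω ≤ (s + τ) * (n / 2) := by
  have hωk : ω ≤ n / 2 := by omega
  obtain rfl | hτ2 := hτ.eq_or_lt
  · exact Nat.mul_le_mul (by omega) hωk
  by_cases hs : n - n / 2 ≤ s + 1
  · exact Nat.mul_le_mul (by omega) hωk
  · calc (n - n / 2 + 1) * ω ≤ (n / 2 + 2) * s := Nat.mul_le_mul (by omega) hωs
      _ ≤ (s + 2) * (n / 2) := by nlinarith [show s ≤ n / 2 by omega]
      _ ≤ (s + τ) * (n / 2) := Nat.mul_le_mul_right _ (by omega)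

lemma cycleTenacity_le_of_isVertexCut {n : ℕ} (hn : 4 ≤ n) {X : Finset (Fin n)}
    (hX : (cycleGraph n).IsVertexCut X) :
    cycleTenacity n ≤ ((X.card : ℝ) + ((cycleGraph n).delVerts X).tauMax) /
      ((cycleGraph n).delVerts X).omegaComp := by
  set H := (cycleGraph n).delVerts X
  have hω2 : 1 < H.omegaComp := hX
  have hcard : Nat.card {v // v ∉ X} = n - X.card := by simp
  have hωs : H.omegaComp ≤ X.card := cycleGraph_omegaComp_delVerts_le (by omega)
    ((cycleGraph_unicyclic (by omega)).1.nonempty_of_isVertexCut hX)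
  have hωm : H.omegaComp ≤ n - X.card := hcard ▸ H.omegaComp_le_card
  have : Nonempty {v // v ∉ X} := (Nat.card_pos_iff.mp (by rw [hcard]; omega)).1
  have key := Nat.sub_half_add_one_mul_le hωs hωm H.one_le_tauMax_s16
    (hcard ▸ H.card_le_tauMax_mul_omegaComp)
  rw [cycleTenacity, div_le_div_iff₀ (show (0 : ℝ) < (n / 2 : ℕ) by norm_cast; omega)
    (by positivity), ← Nat.cast_sub (n.div_le_self 2)]
  exact_mod_cast key

lemma tenacity_cycleGraph {n : ℕ} (hn : 4 ≤ n) : (cycleGraph n).tenacity = cycleTenacity n := by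
  classical
  obtain ⟨I, hI⟩ := (cycleGraph_unicyclic (n := n) (by omega)).exists_isNIndepSet
  rw [Fintype.card_fin] at hI
  have hk : 2 ≤ n / 2 := by omega
  refine le_antisymm (by simpa [cycleTenacity] using hI.tenacity_le hk) ?_
  refine le_csInf ⟨_, Iᶜ, hI.isVertexCut_compl hk, rfl⟩ ?_
  rintro _ ⟨X, hX, rfl⟩
  exact cycleTenacity_le_of_isVertexCut hn hX

end SimpleGraph

theorem max_tenacity_unicyclic (n : ℕ) (hn : 4 ≤ n) :
    IsGreatest {t : ℝ | ∃ G : SimpleGraph (Fin n), G.Unicyclic ∧ t = G.tenacity}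
      (if Odd n then ((n : ℝ) + 3) / ((n : ℝ) - 1) else ((n : ℝ) + 2) / n) := by
  rw [← cycleTenacity_eq]
  refine ⟨⟨cycleGraph n, cycleGraph_unicyclic (by omega), (tenacity_cycleGraph hn).symm⟩, ?_⟩
  rintro _ ⟨G, hG, rfl⟩
  simpa using hG.tenacity_le (by simpa using hn)
end
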